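/- For any finite simple graph G = (V,E), define the curvature K(p) = 1 + Σ_{k≥1} (-1)^k V_{k-1}(p)/(k+1), where V_{k-1}(p) is the number of K_k-subgraphs in the neighborhood of p. Then Σ_{p∈V} K(p) = χ(G), where χ(G) = Σ_{k≥0} (-1)^k v_k is the Euler characteristic and v_k is the number of K_{k+1}-subgraphs of G. -/

import Mathlib

/-!
A `(k+1)`-clique through `p` is `p` joined to a `k`-clique of the unit sphere `S(p)`, so
`∑ₚ V_{k-1}(p) = (k+1) v_k`: summing over all vertices counts every `(k+1)`-clique once for each
of its `k+1` vertices. The weight `1/(k+1)` in the curvature undoes exactly this overcounting,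
and the constant `1` contributes `v_0 = |V|`.
-/

open Finset SimpleGraph

variable {V : Type*}

/-- `V_{k-1}(p)`: the number of `K_k`-subgraphs contained in the neighborhood of `p`. -/
def sphereCliqueCount (G : SimpleGraph V) [Fintype V] [DecidableEq V] [DecidableRel G.Adj]
    (p : V) (k : ℕ) : ℕ :=
  ((G.cliqueFinset k).filter (fun s => s ⊆ G.neighborFinset p)).card

/-- The curvature `K(p) = 1 + Σ_{k ≥ 1} (-1)^k V_{k-1}(p)/(k+1)` (the sum is finite, since all
terms with `k > |V|` vanish). -/
def vertexCurvature (G : SimpleGraph V) [Fintype V] [DecidableEq V] [DecidableRel G.Adj]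
    (p : V) : ℚ :=
  1 + ∑ k ∈ Finset.Icc 1 (Fintype.card V),
        (-1 : ℚ) ^ k * (sphereCliqueCount G p k) / (k + 1)

/-- The Euler characteristic `χ(G) = Σ_{k ≥ 0} (-1)^k v_k`, where `v_k` is the number of
`K_{k+1}`-subgraphs of `G` (all terms with `k ≥ |V|` vanish). -/
def eulerChar (G : SimpleGraph V) [Fintype V] [DecidableEq V] [DecidableRel G.Adj] : ℚ :=
  ∑ k ∈ Finset.range (Fintype.card V + 1),
    (-1 : ℚ) ^ k * (G.cliqueFinset (k + 1)).card

theorem Finset.sum_card_filter_mem {α : Type*} [Fintype α] [DecidableEq α]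
    (B : Finset (Finset α)) : ∑ a, #{b ∈ B | a ∈ b} = ∑ b ∈ B, #b := by
  simp_rw [card_filter]
  rw [sum_comm]
  simp

namespace SimpleGraph

variable [Fintype V] [DecidableEq V] (G : SimpleGraph V) [DecidableRel G.Adj]

theorem card_cliqueFinset_one : #(G.cliqueFinset 1) = Fintype.card V := by
  have : G.cliqueFinset 1 = univ.map ⟨singleton, singleton_injective⟩ := by
    ext s
    simp [eq_comm]
  rw [this, card_map, card_univ]

theorem sphereCliqueCount_eq_card_filter_mem (p : V) (k : ℕ) :
    sphereCliqueCount G p k = #{t ∈ G.cliqueFinset (k + 1) | p ∈ t} := by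
  refine card_nbij' (insert p) (erase · p) ?_ ?_ ?_ ?_
  · simp only [coe_filter, mem_cliqueFinset_iff]
    rintro s ⟨hs, hsp⟩
    exact ⟨hs.insert fun b hb => (mem_neighborFinset _ _ _).1 (hsp hb), mem_insert_self p s⟩
  · simp only [coe_filter, mem_cliqueFinset_iff]
    rintro t ⟨ht, hpt⟩
    refine ⟨ht.erase_of_mem hpt, fun q hq => ?_⟩
    obtain ⟨hqp, hqt⟩ := mem_erase.1 hq
    exact (mem_neighborFinset _ _ _).2 (ht.isClique hpt hqt hqp.symm)
  · simp only [coe_filter]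
    rintro s ⟨-, hsp⟩
    exact erase_insert fun hp => G.notMem_neighborFinset_self p (hsp hp)
  · simp only [coe_filter]
    rintro t ⟨-, hpt⟩
    exact insert_erase hpt

theorem sum_sphereCliqueCount (k : ℕ) :
    ∑ p, sphereCliqueCount G p k = (k + 1) * #(G.cliqueFinset (k + 1)) := by
  simp_rw [sphereCliqueCount_eq_card_filter_mem, sum_card_filter_mem]
  rw [sum_const_nat fun t ht => (mem_cliqueFinset_iff.1 ht).card_eq, mul_comm]

theorem eulerChar_eq_card_add_sum_Icc :
    eulerChar G = Fintype.card V +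
      ∑ k ∈ Icc 1 (Fintype.card V), (-1 : ℚ) ^ k * #(G.cliqueFinset (k + 1)) := by
  rw [eulerChar, range_eq_Ico, sum_eq_sum_Ico_succ_bot (Nat.succ_pos _),
    Nat.succ_eq_add_one, Ico_add_one_right_eq_Icc, card_cliqueFinset_one]
  simp

end SimpleGraph

/-- Gauss-Bonnet for general finite simple graphs: total curvature is the Euler characteristic. -/
theorem gaussBonnet {V : Type*} [Fintype V] [DecidableEq V]
    (G : SimpleGraph V) [DecidableRel G.Adj] :
    ∑ p : V, vertexCurvature G p = eulerChar G := by
  have sum_term (k : ℕ) : ∑ p, (-1 : ℚ) ^ k * sphereCliqueCount G p k / (k + 1) =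
      (-1 : ℚ) ^ k * #(G.cliqueFinset (k + 1)) := by
    rw [← sum_div, ← mul_sum, ← Nat.cast_sum, sum_sphereCliqueCount]
    push_cast
    field_simp
  simp only [vertexCurvature, sum_add_distrib, sum_const, card_univ, nsmul_one]
  rw [sum_comm, eulerChar_eq_card_add_sum_Icc]
  simp_rw [sum_term]
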